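/- If a rewrite system R with algebraic left-hand sides and right-hand sides satisfying FV(r) ⊆ FV(l) is locally confluent on algebraic terms, then the union of R-reduction and β-reduction is locally confluent on all terms. -/

import Mathlib

/-- Terms of a lambda calculus with sorts, function symbols, abstraction,
dependent product and application (de Bruijn indices). -/
inductive Tm (F : Type) : Type
  | var : Nat → Tm F
  | sort : Bool → Tm F
  | symb : F → Tm F
  | lam : Tm F → Tm F → Tm F
  | pi : Tm F → Tm F → Tm F
  | app : Tm F → Tm F → Tm F

namespace Tm

variable {F : Type}

def liftRen (f : Nat → Nat) : Nat → Nat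
  | 0 => 0
  | n + 1 => f n + 1

def rename (f : Nat → Nat) : Tm F → Tm F
  | var n => var (f n)
  | sort s => sort s
  | symb c => symb c
  | lam T b => lam (rename f T) (rename (liftRen f) b)
  | pi T b => pi (rename f T) (rename (liftRen f) b)
  | app t u => app (rename f t) (rename f u)

def liftSub (σ : Nat → Tm F) : Nat → Tm F
  | 0 => var 0
  | n + 1 => rename Nat.succ (σ n)

/-- Simultaneous substitution. -/
def subst (σ : Nat → Tm F) : Tm F → Tm F
  | var n => σ n
  | sort s => sort s
  | symb c => symb c
  | lam T b => lam (subst σ T) (subst (liftSub σ) b)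
  | pi T b => pi (subst σ T) (subst (liftSub σ) b)
  | app t u => app (subst σ t) (subst σ u)

/-- Substitution of `a` for the variable `0` (β-reduction substitution). -/
def subst0 (a b : Tm F) : Tm F :=
  subst (fun n => match n with | 0 => a | m + 1 => var m) b

/-- Free variables of a term. -/
def fv : Tm F → Set Nat
  | var n => {n}
  | sort _ => ∅
  | symb _ => ∅
  | lam T b => fv T ∪ {n | n + 1 ∈ fv b}
  | pi T b => fv T ∪ {n | n + 1 ∈ fv b}
  | app t u => fv t ∪ fv u

/-- `appList t [u₁,…,uₙ]` is the iterated application `t u₁ ⋯ uₙ`. -/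
def appList (t : Tm F) : List (Tm F) → Tm F
  | [] => t
  | u :: us => appList (app t u) us

/-- Algebraic terms: built only from variables and applications `f t₁ ⋯ tₙ`
of function symbols. -/
inductive Alg : Tm F → Prop
  | var (n : Nat) : Alg (var n)
  | symbApp (f : F) (ts : List (Tm F)) : (∀ t ∈ ts, Alg t) → Alg (appList (symb f) ts)

/-- Closure of a base relation under all contexts. -/
inductive Close (b : Tm F → Tm F → Prop) : Tm F → Tm F → Prop
  | base {t u} : b t u → Close b t u
  | lamT {T T' u} : Close b T T' → Close b (lam T u) (lam T' u)
  | lamB {T u u'} : Close b u u' → Close b (lam T u) (lam T u')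
  | piT {T T' u} : Close b T T' → Close b (pi T u) (pi T' u)
  | piB {T u u'} : Close b u u' → Close b (pi T u) (pi T u')
  | appL {t t' u} : Close b t t' → Close b (app t u) (app t' u)
  | appR {t u u'} : Close b u u' → Close b (app t u) (app t u')

/-- One-step rewriting with the rules of `R`: the closure under substitution
and context of the rules. -/
def Rstep (R : Set (Tm F × Tm F)) : Tm F → Tm F → Prop :=
  Close (fun t u => ∃ l r σ, (l, r) ∈ R ∧ t = subst σ l ∧ u = subst σ r)

/-- One-step β-reduction. -/
def Beta : Tm F → Tm F → Prop :=
  Close (fun t u => ∃ T bo a, t = app (lam T bo) a ∧ u = subst0 a bo)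

/-- Every rule has an algebraic left-hand side which is not a variable, and
the free variables of the right-hand side occur in the left-hand side. -/
def GoodRules (R : Set (Tm F × Tm F)) : Prop :=
  ∀ p ∈ R, Alg p.1 ∧ (∀ n, p.1 ≠ var n) ∧ fv p.2 ⊆ fv p.1

end Tm

namespace Tm

variable {F : Type}

theorem liftRen_comp (f g : Nat → Nat) : liftRen (f ∘ g) = liftRen f ∘ liftRen g := by
  funext n; cases n <;> rfl

theorem rename_rename (f g : Nat → Nat) (t : Tm F) :
    rename f (rename g t) = rename (f ∘ g) t := by
  induction t generalizing f g <;> simp [rename, liftRen_comp, *]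

theorem liftSub_comp_ren (σ : Nat → Tm F) (f : Nat → Nat) :
    liftSub (σ ∘ f) = liftSub σ ∘ liftRen f := by
  funext n; cases n <;> rfl

theorem subst_rename (σ : Nat → Tm F) (f : Nat → Nat) (t : Tm F) :
    subst σ (rename f t) = subst (σ ∘ f) t := by
  induction t generalizing σ f <;> simp [rename, subst, liftSub_comp_ren, *]

theorem liftSub_ren_comp (f : Nat → Nat) (σ : Nat → Tm F) :
    liftSub (rename f ∘ σ) = rename (liftRen f) ∘ liftSub σ := by
  funext n; cases n with
  | zero => rfl
  | succ n =>
    show rename Nat.succ (rename f (σ n)) = rename (liftRen f) (rename Nat.succ (σ n))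
    rw [rename_rename, rename_rename]; rfl

theorem rename_subst (f : Nat → Nat) (σ : Nat → Tm F) (t : Tm F) :
    rename f (subst σ t) = subst (rename f ∘ σ) t := by
  induction t generalizing σ f <;> simp [rename, subst, liftSub_ren_comp, *]

theorem liftSub_liftSub (σ τ : Nat → Tm F) :
    liftSub (subst σ ∘ τ) = subst (liftSub σ) ∘ liftSub τ := by
  funext n; cases n with
  | zero => rfl
  | succ n =>
    show rename Nat.succ (subst σ (τ n)) = subst (liftSub σ) (rename Nat.succ (τ n))
    rw [subst_rename, rename_subst]; rfl

theorem subst_subst (σ τ : Nat → Tm F) (t : Tm F) :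
    subst σ (subst τ t) = subst (subst σ ∘ τ) t := by
  induction t generalizing σ τ <;> simp [subst, liftSub_liftSub, *]

theorem liftSub_var : liftSub (var : Nat → Tm F) = var := by
  funext n; cases n <;> rfl

theorem subst_var_id (t : Tm F) : subst var t = t := by
  induction t <;> simp [subst, liftSub_var, *]

theorem subst_ext_fv {σ τ : Nat → Tm F} {t : Tm F} (h : ∀ n ∈ fv t, σ n = τ n) :
    subst σ t = subst τ t := by
  induction t generalizing σ τ with
  | var n => exact h n rfl
  | sort => rfl
  | symb => rfl
  | lam T b ihT ihb =>
    simp only [subst]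
    rw [ihT fun n hn => h n (Or.inl hn), ihb ?_]
    intro n hn
    cases n with
    | zero => rfl
    | succ m => show rename _ (σ m) = rename _ (τ m); rw [h m (Or.inr hn)]
  | pi T b ihT ihb =>
    simp only [subst]
    rw [ihT fun n hn => h n (Or.inl hn), ihb ?_]
    intro n hn
    cases n with
    | zero => rfl
    | succ m => show rename _ (σ m) = rename _ (τ m); rw [h m (Or.inr hn)]
  | app a b iha ihb =>
    simp only [subst]
    rw [iha fun n hn => h n (Or.inl hn), ihb fun n hn => h n (Or.inr hn)]

theorem rename_subst0 (f : Nat → Nat) (a b : Tm F) :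
    rename f (subst0 a b) = subst0 (rename f a) (rename (liftRen f) b) := by
  unfold subst0
  rw [rename_subst, subst_rename]
  apply subst_ext_fv
  intro n _
  cases n <;> rfl

theorem subst_subst0 (θ : Nat → Tm F) (a b : Tm F) :
    subst θ (subst0 a b) = subst0 (subst θ a) (subst (liftSub θ) b) := by
  unfold subst0
  rw [subst_subst, subst_subst]
  apply subst_ext_fv
  intro n _
  cases n with
  | zero => rfl
  | succ m =>
    show subst θ (var m) = subst _ (rename Nat.succ (θ m))
    rw [subst_rename]
    show θ m = _
    have h2 : subst ((fun n => match n with | 0 => subst θ a | m+1 => var m) ∘ Nat.succ) (θ m)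
        = subst var (θ m) := subst_ext_fv (fun n _ => rfl)
    rw [h2, subst_var_id]

end Tm

namespace Tm

variable {F : Type}

theorem Close.mono {b b' : Tm F → Tm F → Prop} (h : ∀ x y, b x y → b' x y)
    {t u : Tm F} (hc : Close b t u) : Close b' t u := by
  induction hc with
  | base hb => exact .base (h _ _ hb)
  | lamT _ ih => exact .lamT ih
  | lamB _ ih => exact .lamB ih
  | piT _ ih => exact .piT ih
  | piB _ ih => exact .piB ih
  | appL _ ih => exact .appL ih
  | appR _ ih => exact .appR ih

theorem close_rename {b : Tm F → Tm F → Prop}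
    (hb : ∀ (f : Nat → Nat) x y, b x y → b (rename f x) (rename f y))
    {t u : Tm F} (hc : Close b t u) : ∀ f, Close b (rename f t) (rename f u) := by
  induction hc with
  | base h => exact fun f => .base (hb f _ _ h)
  | lamT _ ih => exact fun f => .lamT (ih f)
  | lamB _ ih => exact fun f => .lamB (ih (liftRen f))
  | piT _ ih => exact fun f => .piT (ih f)
  | piB _ ih => exact fun f => .piB (ih (liftRen f))
  | appL _ ih => exact fun f => .appL (ih f)
  | appR _ ih => exact fun f => .appR (ih f)

theorem close_subst {b : Tm F → Tm F → Prop}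
    (hb : ∀ (θ : Nat → Tm F) x y, b x y → b (subst θ x) (subst θ y))
    {t u : Tm F} (hc : Close b t u) : ∀ θ, Close b (subst θ t) (subst θ u) := by
  induction hc with
  | base h => exact fun θ => .base (hb θ _ _ h)
  | lamT _ ih => exact fun θ => .lamT (ih θ)
  | lamB _ ih => exact fun θ => .lamB (ih (liftSub θ))
  | piT _ ih => exact fun θ => .piT (ih θ)
  | piB _ ih => exact fun θ => .piB (ih (liftSub θ))
  | appL _ ih => exact fun θ => .appL (ih θ)
  | appR _ ih => exact fun θ => .appR (ih θ)

variable (R : Set (Tm F × Tm F))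

/-- base of R-steps -/
def bR : Tm F → Tm F → Prop :=
  fun t u => ∃ l r σ, (l, r) ∈ R ∧ t = subst σ l ∧ u = subst σ r

/-- base of β-steps -/
def bB : Tm F → Tm F → Prop :=
  fun t u => ∃ T bo a, t = app (lam T bo) a ∧ u = subst0 a bo

/-- union base -/
def bU : Tm F → Tm F → Prop := fun t u => bR R t u ∨ bB t u

theorem bR_rename : ∀ (f : Nat → Nat) x y, bR R x y → bR R (rename f x) (rename f y) := by
  rintro f x y ⟨l, r, σ, hlr, rfl, rfl⟩
  exact ⟨l, r, rename f ∘ σ, hlr, rename_subst f σ l, rename_subst f σ r⟩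

theorem bB_rename : ∀ (f : Nat → Nat) x y, bB (F := F) x y → bB (rename f x) (rename f y) := by
  rintro f x y ⟨T, bo, a, rfl, rfl⟩
  exact ⟨rename f T, rename (liftRen f) bo, rename f a, rfl, rename_subst0 f a bo⟩

theorem bU_rename : ∀ (f : Nat → Nat) x y, bU R x y → bU R (rename f x) (rename f y) := by
  rintro f x y (h | h)
  · exact Or.inl (bR_rename R f x y h)
  · exact Or.inr (bB_rename f x y h)

theorem bR_subst : ∀ (θ : Nat → Tm F) x y, bR R x y → bR R (subst θ x) (subst θ y) := by
  rintro θ x y ⟨l, r, σ, hlr, rfl, rfl⟩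
  exact ⟨l, r, subst θ ∘ σ, hlr, subst_subst θ σ l, subst_subst θ σ r⟩

theorem bB_subst : ∀ (θ : Nat → Tm F) x y, bB (F := F) x y → bB (subst θ x) (subst θ y) := by
  rintro θ x y ⟨T, bo, a, rfl, rfl⟩
  exact ⟨subst θ T, subst (liftSub θ) bo, subst θ a, rfl, subst_subst0 θ a bo⟩

theorem bU_subst : ∀ (θ : Nat → Tm F) x y, bU R x y → bU R (subst θ x) (subst θ y) := by
  rintro θ x y (h | h)
  · exact Or.inl (bR_subst R θ x y h)
  · exact Or.inr (bB_subst θ x y h)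

theorem Rstep_eq : Rstep R = Close (bR R) := rfl

theorem Beta_eq : (Beta : Tm F → Tm F → Prop) = Close bB := rfl

theorem closeU_iff {t u : Tm F} : Close (bU R) t u ↔ Rstep R t u ∨ Beta t u := by
  constructor
  · intro h
    induction h with
    | base h => exact h.imp .base .base
    | lamT _ ih => exact ih.imp .lamT .lamT
    | lamB _ ih => exact ih.imp .lamB .lamB
    | piT _ ih => exact ih.imp .piT .piT
    | piB _ ih => exact ih.imp .piB .piB
    | appL _ ih => exact ih.imp .appL .appL
    | appR _ ih => exact ih.imp .appR .appR
  · rintro (h | h)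
    · exact h.mono fun x y hb => Or.inl hb
    · exact h.mono fun x y hb => Or.inr hb

open Relation

theorem rtg_appL {b : Tm F → Tm F → Prop} {x y v : Tm F}
    (h : ReflTransGen (Close b) x y) : ReflTransGen (Close b) (app x v) (app y v) :=
  ReflTransGen.lift (fun z => app z v) (fun _ _ h => Close.appL h) _ _ h

theorem rtg_appR {b : Tm F → Tm F → Prop} {x y v : Tm F}
    (h : ReflTransGen (Close b) x y) : ReflTransGen (Close b) (app v x) (app v y) :=
  ReflTransGen.lift (fun z => app v z) (fun _ _ h => Close.appR h) _ _ h

theorem rtg_lamT {b : Tm F → Tm F → Prop} {x y v : Tm F}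
    (h : ReflTransGen (Close b) x y) : ReflTransGen (Close b) (lam x v) (lam y v) :=
  ReflTransGen.lift (fun z => lam z v) (fun _ _ h => Close.lamT h) _ _ h

theorem rtg_lamB {b : Tm F → Tm F → Prop} {x y v : Tm F}
    (h : ReflTransGen (Close b) x y) : ReflTransGen (Close b) (lam v x) (lam v y) :=
  ReflTransGen.lift (fun z => lam v z) (fun _ _ h => Close.lamB h) _ _ h

theorem rtg_piT {b : Tm F → Tm F → Prop} {x y v : Tm F}
    (h : ReflTransGen (Close b) x y) : ReflTransGen (Close b) (pi x v) (pi y v) :=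
  ReflTransGen.lift (fun z => pi z v) (fun _ _ h => Close.piT h) _ _ h

theorem rtg_piB {b : Tm F → Tm F → Prop} {x y v : Tm F}
    (h : ReflTransGen (Close b) x y) : ReflTransGen (Close b) (pi v x) (pi v y) :=
  ReflTransGen.lift (fun z => pi v z) (fun _ _ h => Close.piB h) _ _ h

theorem rtg_rename {b : Tm F → Tm F → Prop}
    (hb : ∀ (f : Nat → Nat) x y, b x y → b (rename f x) (rename f y))
    {x y : Tm F} (f : Nat → Nat) (h : ReflTransGen (Close b) x y) :
    ReflTransGen (Close b) (rename f x) (rename f y) :=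
  ReflTransGen.lift (rename f) (fun _ _ h => close_rename hb h f) _ _ h

theorem rtg_subst {b : Tm F → Tm F → Prop}
    (hb : ∀ (θ : Nat → Tm F) x y, b x y → b (subst θ x) (subst θ y))
    {x y : Tm F} (θ : Nat → Tm F) (h : ReflTransGen (Close b) x y) :
    ReflTransGen (Close b) (subst θ x) (subst θ y) :=
  ReflTransGen.lift (subst θ) (fun _ _ h => close_subst hb h θ) _ _ h

/-- pointwise star substitution lemma -/
theorem subst_star {b : Tm F → Tm F → Prop}
    (hb : ∀ (f : Nat → Nat) x y, b x y → b (rename f x) (rename f y))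
    (t : Tm F) : ∀ (σ τ : Nat → Tm F),
    (∀ n, ReflTransGen (Close b) (σ n) (τ n)) →
    ReflTransGen (Close b) (subst σ t) (subst τ t) := by
  induction t with
  | var n => exact fun σ τ h => h n
  | sort s => exact fun _ _ _ => .refl
  | symb c => exact fun _ _ _ => .refl
  | lam T bo ihT ihb =>
    intro σ τ h
    refine .trans (rtg_lamT (ihT σ τ h)) (rtg_lamB (ihb _ _ ?_))
    intro n
    cases n with
    | zero => exact .refl
    | succ m => exact rtg_rename hb Nat.succ (h m)
  | pi T bo ihT ihb =>
    intro σ τ h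
    refine .trans (rtg_piT (ihT σ τ h)) (rtg_piB (ihb _ _ ?_))
    intro n
    cases n with
    | zero => exact .refl
    | succ m => exact rtg_rename hb Nat.succ (h m)
  | app x y ihx ihy =>
    intro σ τ h
    exact .trans (rtg_appL (ihx σ τ h)) (rtg_appR (ihy σ τ h))

end Tm

namespace Tm

variable {F : Type}

theorem appList_concat (t u : Tm F) (ts : List (Tm F)) :
    appList t (ts ++ [u]) = app (appList t ts) u := by
  induction ts generalizing t with
  | nil => rfl
  | cons a as ih => exact ih (app t a)

theorem subst_appList (σ : Nat → Tm F) (t : Tm F) (ts : List (Tm F)) :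
    subst σ (appList t ts) = appList (subst σ t) (ts.map (subst σ)) := by
  induction ts generalizing t with
  | nil => rfl
  | cons a as ih => exact ih (app t a)

/-- head-symbol check -/
def hs : Tm F → Bool
  | symb _ => true
  | app a _ => hs a
  | _ => false

theorem hs_appList (t : Tm F) (ts : List (Tm F)) : hs (appList t ts) = hs t := by
  induction ts generalizing t with
  | nil => rfl
  | cons a as ih => exact (ih (app t a)).trans rfl

theorem hs_subst_symbApp (σ : Nat → Tm F) (f : F) (ts : List (Tm F)) :
    hs (subst σ (appList (symb f) ts)) = true := by
  rw [subst_appList, hs_appList]; rfl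

theorem alg_inv {t : Tm F} (h : Alg t) :
    (∃ n, t = var n) ∨ ∃ f ts, t = appList (symb f) ts ∧ ∀ u ∈ ts, Alg u := by
  cases h with
  | var n => exact Or.inl ⟨n, rfl⟩
  | symbApp f ts hts => exact Or.inr ⟨f, ts, rfl, hts⟩

/-- size measure -/
def siz : Tm F → Nat
  | var _ => 1
  | sort _ => 1
  | symb _ => 1
  | lam a b => siz a + siz b + 1
  | pi a b => siz a + siz b + 1
  | app a b => siz a + siz b + 1

/-- reflexive-transitive subterm relation (one-step generators plus refl) -/
inductive Sub : Tm F → Tm F → Prop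
  | refl (t : Tm F) : Sub t t
  | lam₁ {u T b} : Sub u T → Sub u (lam T b)
  | lam₂ {u T b} : Sub u b → Sub u (lam T b)
  | pi₁ {u T b} : Sub u T → Sub u (pi T b)
  | pi₂ {u T b} : Sub u b → Sub u (pi T b)
  | app₁ {u a b} : Sub u a → Sub u (app a b)
  | app₂ {u a b} : Sub u b → Sub u (app a b)

theorem Sub.trans {u t s : Tm F} (h1 : Sub u t) (h2 : Sub t s) : Sub u s := by
  induction h2 with
  | refl => exact h1
  | lam₁ _ ih => exact .lam₁ ih
  | lam₂ _ ih => exact .lam₂ ih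
  | pi₁ _ ih => exact .pi₁ ih
  | pi₂ _ ih => exact .pi₂ ih
  | app₁ _ ih => exact .app₁ ih
  | app₂ _ ih => exact .app₂ ih

theorem sub_appList_self (t : Tm F) (ts : List (Tm F)) : Sub t (appList t ts) := by
  induction ts generalizing t with
  | nil => exact .refl t
  | cons a as ih => exact Sub.trans (.app₁ (.refl t)) (ih (app t a))

theorem sub_appList_mem {u : Tm F} {ts : List (Tm F)} (h : u ∈ ts) (t : Tm F) :
    Sub u (appList t ts) := by
  induction ts generalizing t with
  | nil => cases h
  | cons a as ih =>
    cases h with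
    | head => exact Sub.trans (.app₂ (.refl u)) (sub_appList_self (app t u) as)
    | tail _ h => exact ih h (app t a)

theorem fv_appList (t : Tm F) (ts : List (Tm F)) :
    fv (appList t ts) = fv t ∪ ⋃ u ∈ ts, fv u := by
  induction ts generalizing t with
  | nil => simp [appList]
  | cons a as ih =>
    show fv (appList (app t a) as) = _
    rw [ih]
    show fv t ∪ fv a ∪ _ = _
    ext n
    simp [Set.mem_union, or_assoc]

theorem sub_subst_fv {l : Tm F} (hl : Alg l) (σ : Nat → Tm F) :
    ∀ n ∈ fv l, Sub (σ n) (subst σ l) := by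
  induction hl with
  | var m =>
    intro n hn
    cases hn
    exact .refl _
  | symbApp f ts hts ih =>
    intro n hn
    rw [fv_appList] at hn
    rcases hn with hn | hn
    · cases hn
    · simp only [Set.mem_iUnion] at hn
      obtain ⟨u, hu, hnu⟩ := hn
      refine Sub.trans (ih u hu n hnu) ?_
      rw [subst_appList]
      exact sub_appList_mem (List.mem_map_of_mem hu) _

/-- list of all subterms -/
def subL : Tm F → List (Tm F)
  | var n => [var n]
  | sort s => [sort s]
  | symb c => [symb c]
  | lam a b => lam a b :: (subL a ++ subL b)
  | pi a b => pi a b :: (subL a ++ subL b)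
  | app a b => app a b :: (subL a ++ subL b)

theorem self_mem_subL (t : Tm F) : t ∈ subL t := by
  cases t <;> simp [subL]

theorem sub_mem_subL {u t : Tm F} (h : Sub u t) : u ∈ subL t := by
  induction h with
  | refl => exact self_mem_subL _
  | lam₁ _ ih => simp [subL]; right; left; exact ih
  | lam₂ _ ih => simp [subL]; right; right; exact ih
  | pi₁ _ ih => simp [subL]; right; left; exact ih
  | pi₂ _ ih => simp [subL]; right; right; exact ih
  | app₁ _ ih => simp [subL]; right; left; exact ih
  | app₂ _ ih => simp [subL]; right; right; exact ih

theorem exists_inverse (t : Tm F) :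
    ∃ (φ : Tm F → Nat) (θ : Nat → Tm F), ∀ u, Sub u t → θ (φ u) = u := by
  classical
  refine ⟨fun u => (subL t).idxOf u, fun n => (subL t).getD n (var 0), ?_⟩
  intro u hu
  have hmem := sub_mem_subL hu
  have hlt : (subL t).idxOf u < (subL t).length := List.idxOf_lt_length_iff.mpr hmem
  show (subL t).getD ((subL t).idxOf u) (var 0) = u
  rw [List.getD_eq_getElem _ _ hlt]
  exact List.getElem_idxOf hlt

/-- algebraic cap of a term relative to a naming function φ -/
def cap (φ : Tm F → Nat) : Tm F → Tm F
  | symb f => symb f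
  | app a b => if hs a then app (cap φ a) (cap φ b) else var (φ (app a b))
  | t => var (φ t)

theorem cap_alg (φ : Tm F → Nat) (t : Tm F) :
    Alg (cap φ t) ∧ (hs t = true → ∃ f ts, cap φ t = appList (symb f) ts ∧ ∀ u ∈ ts, Alg u) := by
  induction t with
  | var n => exact ⟨.var _, by simp [hs]⟩
  | sort s => exact ⟨.var _, by simp [hs]⟩
  | symb f =>
    refine ⟨?_, fun _ => ⟨f, [], rfl, by simp⟩⟩
    exact Alg.symbApp f [] (by simp)
  | lam a b iha ihb => exact ⟨.var _, by simp [hs]⟩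
  | pi a b iha ihb => exact ⟨.var _, by simp [hs]⟩
  | app a b iha ihb =>
    by_cases h : hs a
    · obtain ⟨f, ts, hts, halg⟩ := iha.2 h
      have hcap : cap φ (app a b) = appList (symb f) (ts ++ [cap φ b]) := by
        rw [appList_concat]
        simp [cap, h, hts]
      constructor
      · rw [hcap]
        refine Alg.symbApp f _ ?_
        intro u hu
        rcases List.mem_append.mp hu with hu | hu
        · exact halg u hu
        · simp at hu; subst hu; exact ihb.1
      · intro _
        refine ⟨f, ts ++ [cap φ b], hcap, ?_⟩
        intro u hu
        rcases List.mem_append.mp hu with hu | hu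
        · exact halg u hu
        · simp at hu; subst hu; exact ihb.1
    · constructor
      · simp [cap, h]; exact .var _
      · intro hh
        exact absurd hh (by simp [hs] at h ⊢; exact h)

theorem cap_appList (φ : Tm F → Nat) (ts : List (Tm F)) :
    ∀ (t : Tm F), hs t = true → cap φ (appList t ts) = appList (cap φ t) (ts.map (cap φ)) := by
  induction ts with
  | nil => intro t _; rfl
  | cons a as ih =>
    intro t ht
    show cap φ (appList (app t a) as) = _
    rw [ih (app t a) (by simpa [hs] using ht)]
    simp [cap, ht]
    rfl

theorem cap_subst_alg (φ : Tm F → Nat) {l : Tm F} (hl : Alg l) (σ : Nat → Tm F) :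
    cap φ (subst σ l) = subst (fun n => cap φ (σ n)) l := by
  induction hl with
  | var n => rfl
  | symbApp f ts hts ih =>
    simp only [subst_appList, subst]
    rw [cap_appList φ _ (symb f) rfl]
    show appList (symb f) _ = appList (symb f) _
    congr 1
    rw [List.map_map]
    apply List.map_congr_left
    intro u hu
    exact ih u hu

theorem subst_cap_id {θ : Nat → Tm F} {φ : Tm F → Nat} {t : Tm F}
    (H : ∀ u, Sub u t → θ (φ u) = u) : subst θ (cap φ t) = t := by
  induction t with
  | var n => exact H _ (.refl _)
  | sort s => exact H _ (.refl _)
  | symb f => rfl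
  | lam a b iha ihb => exact H _ (.refl _)
  | pi a b iha ihb => exact H _ (.refl _)
  | app a b iha ihb =>
    by_cases h : hs a
    · show subst θ (if hs a then app (cap φ a) (cap φ b) else var (φ (app a b))) = _
      rw [if_pos h]
      show app (subst θ (cap φ a)) (subst θ (cap φ b)) = app a b
      rw [iha fun u hu => H u (.app₁ hu), ihb fun u hu => H u (.app₂ hu)]
    · show subst θ (if hs a then app (cap φ a) (cap φ b) else var (φ (app a b))) = _
      rw [if_neg h]
      exact H _ (.refl _)

end Tm

namespace Tm

open Relation

variable {F : Type} (R : Set (Tm F × Tm F))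

theorem rtgR_to_U {x y : Tm F} (h : ReflTransGen (Close (bR R)) x y) :
    ReflTransGen (Close (bU R)) x y :=
  ReflTransGen.mono (fun _ _ hc => hc.mono fun _ _ => Or.inl) _ _ h

theorem core (hR : GoodRules R) (φ : Tm F → Nat) (θ : Nat → Tm F) :
    ∀ (N : Nat) (l : Tm F), siz l ≤ N → Alg l → ∀ (σ : Nat → Tm F) (v : Tm F),
    Close (bU R) (subst σ l) v →
    (∀ u, Sub u (subst σ l) → θ (φ u) = u) →
    (∃ τ, (∀ n, ReflTransGen (Close (bU R)) (σ n) (τ n)) ∧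
          ReflTransGen (Close (bU R)) v (subst τ l))
    ∨ (∃ c, Close (bR R) (cap φ (subst σ l)) c ∧ v = subst θ c) := by
  -- root base helper
  have base_case : ∀ (t v : Tm F), bU R t v → hs t = true →
      (∀ u, Sub u t → θ (φ u) = u) →
      ∃ c, Close (bR R) (cap φ t) c ∧ v = subst θ c := by
    rintro t v (⟨l', r', σ', hmem, rfl, rfl⟩ | ⟨T, bo, a, rfl, rfl⟩) hhs H
    · obtain ⟨hl'alg, _, hfv⟩ := hR _ hmem
      refine ⟨subst (fun n => cap φ (σ' n)) r', ?_, ?_⟩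
      · rw [cap_subst_alg φ hl'alg σ']
        exact .base ⟨l', r', _, hmem, rfl, rfl⟩
      · rw [subst_subst]
        apply subst_ext_fv
        intro n hn
        show σ' n = subst θ (cap φ (σ' n))
        refine (subst_cap_id ?_).symm
        intro x hx
        exact H x (hx.trans (sub_subst_fv hl'alg σ' n (hfv hn)))
    · simp [hs] at hhs
  intro N
  induction N with
  | zero =>
    intro l hsiz
    exfalso
    cases l <;> simp [siz] at hsiz
  | succ N ih =>
    intro l hsiz halg σ v hv H
    rcases alg_inv halg with ⟨n, rfl⟩ | ⟨f, ts, rfl, hts⟩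
    · -- variable case
      left
      refine ⟨Function.update σ n v, ?_, ?_⟩
      · intro m
        by_cases hm : m = n
        · subst hm
          rw [Function.update_self]
          exact ReflTransGen.single hv
        · rw [Function.update_of_ne hm]
      · show ReflTransGen _ v (Function.update σ n v n)
        rw [Function.update_self]
    · rcases List.eq_nil_or_concat ts with rfl | ⟨ts', tl, rfl⟩
      · -- t = symb f
        simp only [appList, subst] at hv
        cases hv with
        | base h =>
          right
          exact base_case _ _ h rfl H
      · -- l = app lA tl
        rw [List.concat_eq_append] at hts hv hsiz halg H ⊢
        rw [appList_concat] at hv hsiz halg H ⊢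
        simp only [subst] at hv
        have hAlgA : Alg (appList (symb f) ts') :=
          Alg.symbApp f ts' fun u hu => hts u (List.mem_append.mpr (Or.inl hu))
        have hAlgB : Alg tl := hts tl (List.mem_append.mpr (Or.inr (by simp)))
        have hsizA : siz (appList (symb f) ts') ≤ N := by
          simp only [siz] at hsiz; omega
        have hsizB : siz tl ≤ N := by
          simp only [siz] at hsiz; omega
        have hhsA : hs (subst σ (appList (symb f) ts')) = true := hs_subst_symbApp σ f ts'
        have hcapApp : cap φ (subst σ (app (appList (symb f) ts') tl))
            = app (cap φ (subst σ (appList (symb f) ts'))) (cap φ (subst σ tl)) := by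
          show cap φ (app _ _) = _
          simp [cap, hhsA]
        cases hv with
        | base h =>
          right
          refine base_case _ _ h ?_ H
          show hs (app _ _) = true
          simpa [hs] using hhsA
        | appL h =>
          have HA : ∀ u, Sub u (subst σ (appList (symb f) ts')) → θ (φ u) = u :=
            fun u hu => H u (hu.trans (.app₁ (.refl _)))
          rcases ih (appList (symb f) ts') hsizA hAlgA σ _ h HA with ⟨τ, hτ, hA'⟩ | ⟨c, hc, rfl⟩
          · left
            refine ⟨τ, hτ, ?_⟩
            simp only [subst]
            exact .trans (rtg_appL hA') (rtg_appR (subst_star (bU_rename R) tl σ τ hτ))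
          · right
            refine ⟨app c (cap φ (subst σ tl)), ?_, ?_⟩
            · rw [hcapApp]
              exact .appL hc
            · show app _ _ = app _ _
              rw [subst_cap_id fun u hu => H u (hu.trans (.app₂ (.refl _)))]
        | appR h =>
          have HB : ∀ u, Sub u (subst σ tl) → θ (φ u) = u :=
            fun u hu => H u (hu.trans (.app₂ (.refl _)))
          rcases ih tl hsizB hAlgB σ _ h HB with ⟨τ, hτ, hB'⟩ | ⟨c, hc, rfl⟩
          · left
            refine ⟨τ, hτ, ?_⟩
            simp only [subst]
            exact .trans (rtg_appR hB')
              (rtg_appL (subst_star (bU_rename R) (appList (symb f) ts') σ τ hτ))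
          · right
            refine ⟨app (cap φ (subst σ (appList (symb f) ts'))) c, ?_, ?_⟩
            · rw [hcapApp]
              exact .appR hc
            · show app _ _ = app _ _
              rw [subst_cap_id fun u hu => H u (hu.trans (.app₁ (.refl _)))]

end Tm

namespace Tm

open Relation

variable {F : Type} {R : Set (Tm F × Tm F)}

theorem root_R (hR : GoodRules R)
    (hloc : ∀ t u v : Tm F, Alg t → Rstep R t u → Rstep R t v →
      ∃ w, ReflTransGen (Rstep R) u w ∧ ReflTransGen (Rstep R) v w)
    {t u v : Tm F} (hb : bR R t u) (hv : Close (bU R) t v) :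
    ∃ w, ReflTransGen (Close (bU R)) u w ∧ ReflTransGen (Close (bU R)) v w := by
  obtain ⟨l, r, σ, hmem, rfl, rfl⟩ := hb
  obtain ⟨hlalg, _, hfv⟩ := hR _ hmem
  obtain ⟨φ, θ, H⟩ := exists_inverse (subst σ l)
  rcases core R hR φ θ (siz l) l le_rfl hlalg σ _ hv H with ⟨τ, hτ, hvl⟩ | ⟨c, hc, rfl⟩
  · refine ⟨subst τ r, ?_, ?_⟩
    · exact subst_star (bU_rename R) r σ τ hτ
    · exact hvl.tail (.base (Or.inl ⟨l, r, τ, hmem, rfl, rfl⟩))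
  · have hcap : cap φ (subst σ l) = subst (fun n => cap φ (σ n)) l := cap_subst_alg φ hlalg σ
    have halg : Alg (cap φ (subst σ l)) := (cap_alg φ _).1
    have step1 : Rstep R (cap φ (subst σ l)) (subst (fun n => cap φ (σ n)) r) := by
      rw [Rstep_eq, hcap]
      exact .base ⟨l, r, _, hmem, rfl, rfl⟩
    have step2 : Rstep R (cap φ (subst σ l)) c := by rw [Rstep_eq]; exact hc
    obtain ⟨w₀, h1, h2⟩ := hloc _ _ _ halg step1 step2
    have key : ∀ s : Tm F, fv s ⊆ fv l →
        subst θ (subst (fun n => cap φ (σ n)) s) = subst σ s := by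
      intro s hsub
      rw [subst_subst]
      apply subst_ext_fv
      intro n hn
      show subst θ (cap φ (σ n)) = σ n
      apply subst_cap_id
      intro x hx
      exact H x (hx.trans (sub_subst_fv hlalg σ n (hsub hn)))
    refine ⟨subst θ w₀, ?_, ?_⟩
    · rw [← key r hfv]
      exact rtgR_to_U R (rtg_subst (bR_subst R) θ (by rw [← Rstep_eq]; exact h1))
    · exact rtgR_to_U R (rtg_subst (bR_subst R) θ (by rw [← Rstep_eq]; exact h2))

theorem not_bR_lam (hR : GoodRules R) {T bo v : Tm F} : ¬ bR R (lam T bo) v := by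
  rintro ⟨l, r, σ, hmem, heq, rfl⟩
  obtain ⟨hlalg, hnv, _⟩ := hR _ hmem
  rcases alg_inv hlalg with ⟨n, rfl⟩ | ⟨f, ts, rfl, _⟩
  · exact hnv n rfl
  · have := hs_subst_symbApp σ f ts
    rw [← heq] at this
    simp [hs] at this

theorem subst0_is_subst (a bo : Tm F) :
    subst0 a bo = subst (fun n => match n with | 0 => a | m + 1 => var m) bo := rfl

theorem root_B (hR : GoodRules R) {t u v : Tm F} (hb : bB t u) (hv : Close (bU R) t v) :
    ∃ w, ReflTransGen (Close (bU R)) u w ∧ ReflTransGen (Close (bU R)) v w := by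
  obtain ⟨T, bo, a, rfl, rfl⟩ := hb
  cases hv with
  | base h =>
    rcases h with h | ⟨T', bo', a', heq, rfl⟩
    · obtain ⟨l, r, σ, hmem, heq, rfl⟩ := h
      obtain ⟨hlalg, hnv, _⟩ := hR _ hmem
      rcases alg_inv hlalg with ⟨n, rfl⟩ | ⟨f, ts, rfl, _⟩
      · exact absurd rfl (hnv n)
      · have := hs_subst_symbApp σ f ts
        rw [← heq] at this
        simp [hs] at this
    · injection heq with h1 h2
      injection h1 with h3 h4
      subst h2; subst h3; subst h4
      exact ⟨subst0 a bo, .refl, .refl⟩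
  | appL h =>
    cases h with
    | base h2 =>
      rcases h2 with h2 | ⟨T', bo', a', heq, rfl⟩
      · exact absurd h2 (not_bR_lam hR)
      · cases heq
    | lamT h2 =>
      exact ⟨subst0 a bo, .refl,
        ReflTransGen.single (.base (Or.inr ⟨_, bo, a, rfl, rfl⟩))⟩
    | lamB h2 =>
      rename_i bo'
      refine ⟨subst0 a bo', ?_, ?_⟩
      · rw [subst0_is_subst, subst0_is_subst]
        exact ReflTransGen.single (close_subst (bU_subst R) h2 _)
      · exact ReflTransGen.single (.base (Or.inr ⟨T, bo', a, rfl, rfl⟩))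
  | appR h =>
    refine ⟨subst0 _ bo, ?_, ReflTransGen.single (.base (Or.inr ⟨T, bo, _, rfl, rfl⟩))⟩
    rw [subst0_is_subst, subst0_is_subst]
    apply subst_star (bU_rename R)
    intro n
    cases n with
    | zero => exact ReflTransGen.single h
    | succ m => exact .refl

theorem root_join (hR : GoodRules R)
    (hloc : ∀ t u v : Tm F, Alg t → Rstep R t u → Rstep R t v →
      ∃ w, ReflTransGen (Rstep R) u w ∧ ReflTransGen (Rstep R) v w)
    {t u v : Tm F} (hb : bU R t u) (hv : Close (bU R) t v) :
    ∃ w, ReflTransGen (Close (bU R)) u w ∧ ReflTransGen (Close (bU R)) v w := by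
  rcases hb with h | h
  · exact root_R hR hloc h hv
  · exact root_B hR h hv

theorem join_main (hR : GoodRules R)
    (hloc : ∀ t u v : Tm F, Alg t → Rstep R t u → Rstep R t v →
      ∃ w, ReflTransGen (Rstep R) u w ∧ ReflTransGen (Rstep R) v w)
    {t u v : Tm F} (hu : Close (bU R) t u) (hv : Close (bU R) t v) :
    ∃ w, ReflTransGen (Close (bU R)) u w ∧ ReflTransGen (Close (bU R)) v w := by
  induction hu generalizing v with
  | base h => exact root_join hR hloc h hv
  | @lamT T T' bo h ih =>
    cases hv with
    | base h2 =>
      obtain ⟨w, h1, h2⟩ := root_join hR hloc h2 (.lamT h)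
      exact ⟨w, h2, h1⟩
    | lamT h2 =>
      obtain ⟨w, hw1, hw2⟩ := ih h2
      exact ⟨lam w bo, rtg_lamT hw1, rtg_lamT hw2⟩
    | lamB h2 =>
      exact ⟨lam T' _, ReflTransGen.single (.lamB h2), ReflTransGen.single (.lamT h)⟩
  | @lamB T bo bo' h ih =>
    cases hv with
    | base h2 =>
      obtain ⟨w, h1, h2⟩ := root_join hR hloc h2 (.lamB h)
      exact ⟨w, h2, h1⟩
    | lamT h2 =>
      exact ⟨lam _ bo', ReflTransGen.single (.lamT h2), ReflTransGen.single (.lamB h)⟩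
    | lamB h2 =>
      obtain ⟨w, hw1, hw2⟩ := ih h2
      exact ⟨lam T w, rtg_lamB hw1, rtg_lamB hw2⟩
  | @piT T T' bo h ih =>
    cases hv with
    | base h2 =>
      obtain ⟨w, h1, h2⟩ := root_join hR hloc h2 (.piT h)
      exact ⟨w, h2, h1⟩
    | piT h2 =>
      obtain ⟨w, hw1, hw2⟩ := ih h2
      exact ⟨pi w bo, rtg_piT hw1, rtg_piT hw2⟩
    | piB h2 =>
      exact ⟨pi T' _, ReflTransGen.single (.piB h2), ReflTransGen.single (.piT h)⟩
  | @piB T bo bo' h ih =>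
    cases hv with
    | base h2 =>
      obtain ⟨w, h1, h2⟩ := root_join hR hloc h2 (.piB h)
      exact ⟨w, h2, h1⟩
    | piT h2 =>
      exact ⟨pi _ bo', ReflTransGen.single (.piT h2), ReflTransGen.single (.piB h)⟩
    | piB h2 =>
      obtain ⟨w, hw1, hw2⟩ := ih h2
      exact ⟨pi T w, rtg_piB hw1, rtg_piB hw2⟩
  | @appL a a' bo h ih =>
    cases hv with
    | base h2 =>
      obtain ⟨w, h1, h2⟩ := root_join hR hloc h2 (.appL h)
      exact ⟨w, h2, h1⟩
    | appL h2 =>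
      obtain ⟨w, hw1, hw2⟩ := ih h2
      exact ⟨app w bo, rtg_appL hw1, rtg_appL hw2⟩
    | appR h2 =>
      exact ⟨app a' _, ReflTransGen.single (.appR h2), ReflTransGen.single (.appL h)⟩
  | @appR a bo bo' h ih =>
    cases hv with
    | base h2 =>
      obtain ⟨w, h1, h2⟩ := root_join hR hloc h2 (.appR h)
      exact ⟨w, h2, h1⟩
    | appL h2 =>
      exact ⟨app _ bo', ReflTransGen.single (.appL h2), ReflTransGen.single (.appR h)⟩
    | appR h2 =>
      obtain ⟨w, hw1, hw2⟩ := ih h2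
      exact ⟨app a w, rtg_appR hw1, rtg_appR hw2⟩

end Tm

open Tm in
/-- If a rewrite system with algebraic left-hand sides is locally confluent on
algebraic terms, then the union of rewriting and β-reduction is locally
confluent on all terms. -/
theorem local_confluence_beta_R {F : Type} (R : Set (Tm F × Tm F))
    (hR : GoodRules R)
    (hloc : ∀ t u v : Tm F, Alg t → Rstep R t u → Rstep R t v →
      ∃ w, Relation.ReflTransGen (Rstep R) u w ∧ Relation.ReflTransGen (Rstep R) v w) :
    ∀ t u v : Tm F, (Rstep R t u ∨ Beta t u) → (Rstep R t v ∨ Beta t v) →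
      ∃ w, Relation.ReflTransGen (fun a b => Rstep R a b ∨ Beta a b) u w ∧
        Relation.ReflTransGen (fun a b => Rstep R a b ∨ Beta a b) v w := by
  intro t u v hu hv
  obtain ⟨w, h1, h2⟩ := join_main hR hloc ((closeU_iff R).mpr hu) ((closeU_iff R).mpr hv)
  exact ⟨w, Relation.ReflTransGen.mono (fun a b h => (closeU_iff R).mp h) _ _ h1,
    Relation.ReflTransGen.mono (fun a b h => (closeU_iff R).mp h) _ _ h2⟩
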